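/- arXiv:0803.2341 — 8 statements merged into one kernel-verified Lean document; each statement's English description precedes it below -/
import Mathlib

section
/- If u(t) satisfies the Ince-V equation u'' = -2u u' + q(t) u' + q'(t) u (with u nonvanishing), then the functions x = 1/u and y = u' + u² - q(t)u satisfy the system x' = -x²y - q(t)x + 1 and y' = 0. -/
/-! `x = 1/u` has `x' = -u'/u²`, and `-x² y - q x + 1` reduces to the same expression by
algebra alone, for any `y = u' + u² - q u`. The ODE enters only through `y`: its derivative is
`u'' + 2 u u' - q' u - q u'`, which the Ince-V equation makes vanish. -/

section

variable {𝕜 𝕜' : Type*} [NontriviallyNormedField 𝕜]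

theorem deriv_fun_inv_apply [NontriviallyNormedField 𝕜'] [NormedAlgebra 𝕜 𝕜'] {u : 𝕜 → 𝕜'}
    {t : 𝕜} (hu : DifferentiableAt 𝕜 u t) (ht : u t ≠ 0) :
    deriv (fun s => (u s)⁻¹) t = -deriv u t / u t ^ 2 :=
  ((hasDerivAt_inv ht).comp t hu.hasDerivAt).deriv.trans (by ring)

theorem deriv_ince_V_first_integral_eq_zero [NormedCommRing 𝕜'] [NormedAlgebra 𝕜 𝕜']
    {q u : 𝕜 → 𝕜'} {t : 𝕜} (hq : DifferentiableAt 𝕜 q t) (hu : DifferentiableAt 𝕜 u t)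
    (hu' : DifferentiableAt 𝕜 (deriv u) t)
    (hode : deriv (deriv u) t = -2 * u t * deriv u t + q t * deriv u t + deriv q t * u t) :
    deriv (fun s => deriv u s + u s ^ 2 - q s * u s) t = 0 := by
  have hy := (hu'.hasDerivAt.fun_add (hu.hasDerivAt.fun_pow 2)).fun_sub
    (hq.hasDerivAt.fun_mul hu.hasDerivAt)
  rw [hy.deriv, hode]
  push_cast
  ring

end

/-- Ince-V: if `u'' = -2 u u' + q u' + q' u` with `u` nonvanishing, then
`x = 1/u`, `y = u' + u² - q u` satisfy `x' = -x² y - q x + 1`, `y' = 0`. -/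
theorem ince_V (q u : ℝ → ℂ)
    (hq : Differentiable ℝ q)
    (hu : Differentiable ℝ u) (hu' : Differentiable ℝ (deriv u))
    (hne : ∀ t, u t ≠ 0)
    (hode : ∀ t, deriv (deriv u) t =
      -2 * u t * deriv u t + q t * deriv u t + deriv q t * u t) :
    ∀ t, deriv (fun s => (u s)⁻¹) t =
        -((u t)⁻¹) ^ 2 * (deriv u t + (u t) ^ 2 - q t * u t)
          - q t * (u t)⁻¹ + 1 ∧
      deriv (fun s => deriv u s + (u s) ^ 2 - q s * u s) t = 0 := by
  intro t
  refine ⟨?_, deriv_ince_V_first_integral_eq_zero (hq t) (hu t) (hu' t) (hode t)⟩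
  rw [deriv_fun_inv_apply (hu t) (hne t)]
  field_simp [hne t]
  ring
end

section
/- The function H(x,y) = x²y²/2 - (α/2)x² - (γ/δ)xy + δy - βx is a first integral of the system x' = x²y - (γ/δ)x + δ, y' = -xy² + αx + (γ/δ)y + β; i.e., for any solution (x(t), y(t)), the quantity H(x(t), y(t)) is constant. -/
/-!
The Ince XII system is Hamiltonian: `x' = ∂H/∂y` and `y' = -∂H/∂x`. Along any solution the
derivative of `H(x, y)` is therefore `∂ₓH ∂ᵧH - ∂ᵧH ∂ₓH = 0`, so `H` is constant.
-/

open ContinuousLinearMap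

theorem hamiltonian_flow_conserved {𝕜 : Type*} [RCLike 𝕜] {H : 𝕜 × 𝕜 → 𝕜}
    {H' : 𝕜 × 𝕜 → 𝕜 × 𝕜 →L[𝕜] 𝕜} (hH : ∀ p, HasFDerivAt H (H' p) p) {x y : ℝ → 𝕜}
    (hx : ∀ t, HasDerivAt x (H' (x t, y t) (0, 1)) t)
    (hy : ∀ t, HasDerivAt y (-H' (x t, y t) (1, 0)) t) (t₁ t₂ : ℝ) :
    H (x t₁, y t₁) = H (x t₂, y t₂) := by
  have hlin : ∀ (L : 𝕜 × 𝕜 →L[𝕜] 𝕜) (a b : 𝕜), L (a, b) = a * L (1, 0) + b * L (0, 1) := by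
    intro L a b
    have hab : ((a, b) : 𝕜 × 𝕜) = a • (1, 0) + b • (0, 1) := Prod.ext (by simp) (by simp)
    rw [hab, map_add, map_smul, map_smul, smul_eq_mul, smul_eq_mul]
  have hderiv : ∀ t, HasDerivAt (fun t => H (x t, y t)) 0 t := by
    intro t
    have hcomp := ((hH (x t, y t)).restrictScalars ℝ).comp_hasDerivAt t ((hx t).prodMk (hy t))
    refine hcomp.congr_deriv ?_
    rw [coe_restrictScalars', hlin (H' (x t, y t))]
    ring
  exact is_const_of_deriv_eq_zero (fun t => (hderiv t).differentiableAt)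
    (fun t => (hderiv t).deriv) t₁ t₂

section InceXII

variable {𝕜 : Type*} [RCLike 𝕜] (α β γ δ : 𝕜)

def inceXIIHamiltonian (p : 𝕜 × 𝕜) : 𝕜 :=
  p.1 ^ 2 * p.2 ^ 2 / 2 - (α / 2) * p.1 ^ 2 - (γ / δ) * p.1 * p.2 + δ * p.2 - β * p.1

def inceXIIHamiltonianFDeriv (p : 𝕜 × 𝕜) : 𝕜 × 𝕜 →L[𝕜] 𝕜 :=
  (p.1 * p.2 ^ 2 - α * p.1 - (γ / δ) * p.2 - β) • fst 𝕜 𝕜 𝕜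
    + (p.1 ^ 2 * p.2 - (γ / δ) * p.1 + δ) • snd 𝕜 𝕜 𝕜

theorem hasFDerivAt_inceXIIHamiltonian (p : 𝕜 × 𝕜) :
    HasFDerivAt (inceXIIHamiltonian α β γ δ) (inceXIIHamiltonianFDeriv α β γ δ p) p := by
  have hfst := hasFDerivAt_fst (𝕜 := 𝕜) (p := p)
  have hsnd := hasFDerivAt_snd (𝕜 := 𝕜) (p := p)
  have h := (((((hfst.pow 2).fun_mul (hsnd.pow 2)).mul_const 2⁻¹).fun_sub
    ((hfst.pow 2).const_mul (α / 2))).fun_sub ((hfst.const_mul (γ / δ)).fun_mul hsnd)).fun_add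
    (hsnd.const_mul δ) |>.fun_sub (hfst.const_mul β)
  refine (h.congr_fderiv ?_).congr_of_eventuallyEq (.of_forall fun q => ?_)
  · ext <;> simp [inceXIIHamiltonianFDeriv] <;> ring
  · simp [inceXIIHamiltonian, div_eq_mul_inv]

end InceXII

theorem ince_XII_first_integral_general (α β γ δ : ℂ) (x y : ℝ → ℂ)
    (hx : Differentiable ℝ x) (hy : Differentiable ℝ y)
    (hx' : ∀ t, deriv x t = (x t) ^ 2 * y t - (γ / δ) * x t + δ)
    (hy' : ∀ t, deriv y t = -(x t) * (y t) ^ 2 + α * x t + (γ / δ) * y t + β) :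
    ∀ t₁ t₂ : ℝ,
      (x t₁) ^ 2 * (y t₁) ^ 2 / 2 - (α / 2) * (x t₁) ^ 2
          - (γ / δ) * x t₁ * y t₁ + δ * y t₁ - β * x t₁ =
      (x t₂) ^ 2 * (y t₂) ^ 2 / 2 - (α / 2) * (x t₂) ^ 2
          - (γ / δ) * x t₂ * y t₂ + δ * y t₂ - β * x t₂ := by
  refine hamiltonian_flow_conserved (hasFDerivAt_inceXIIHamiltonian α β γ δ) (fun t => ?_)
    (fun t => ?_)
  · exact (hx t).hasDerivAt.congr_deriv (by simp [inceXIIHamiltonianFDeriv, hx' t])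
  · exact (hy t).hasDerivAt.congr_deriv (by simp [inceXIIHamiltonianFDeriv, hy' t]; ring)

/-- `H = x²y²/2 - (α/2)x² - (γ/δ)xy + δy - βx` is a first integral of the
Ince-XII system. -/
theorem ince_XII_first_integral (α β γ δ : ℂ) (hδ : δ ≠ 0) (x y : ℝ → ℂ)
    (hx : Differentiable ℝ x) (hy : Differentiable ℝ y)
    (hx' : ∀ t, deriv x t = (x t) ^ 2 * y t - (γ / δ) * x t + δ)
    (hy' : ∀ t, deriv y t = -(x t) * (y t) ^ 2 + α * x t + (γ / δ) * y t + β) :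
    ∀ t₁ t₂ : ℝ,
      (x t₁) ^ 2 * (y t₁) ^ 2 / 2 - (α / 2) * (x t₁) ^ 2
          - (γ / δ) * x t₁ * y t₁ + δ * y t₁ - β * x t₁ =
      (x t₂) ^ 2 * (y t₂) ^ 2 / 2 - (α / 2) * (x t₂) ^ 2
          - (γ / δ) * x t₂ * y t₂ + δ * y t₂ - β * x t₂ :=
  ince_XII_first_integral_general α β γ δ x y hx hy hx' hy'
end

section
/- The transformation s₂ : (x, y) ↦ (x, y - 2γ/(δx) + 2δ/x²), (α,β,γ,δ) ↦ (α,β,γ,-δ) maps solutions of the system x' = x²y - (γ/δ)x + δ, y' = -xy² + αx + (γ/δ)y + β with parameters (α,β,γ,δ) to solutions of the same system with parameters (α,β,γ,-δ), wherever x is nonvanishing. -/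
/-!
Since `s₂` does not move `x`, the first equation only needs the algebraic identity
`x² (y - 2γ/(δx) + 2δ/x²) + (γ/δ) x - δ = x² y - (γ/δ) x + δ`. For the second, the chain rule
expresses the derivative of the new `y` through `x'` and `y'`, and substituting the `δ`-system
leaves a rational identity in `x, y` that clears to a polynomial one.
-/

namespace InceXII

variable {K : Type*} [Field K]

def xDot (γ δ x y : K) : K := x ^ 2 * y - (γ / δ) * x + δ

def yDot (α β γ δ x y : K) : K := -x * y ^ 2 + α * x + (γ / δ) * y + β

/-- The `y`-component of the Bäcklund transformation `s₂`; its `x`-component is the identity. -/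
def s₂ (γ δ x y : K) : K := y - 2 * γ / (δ * x) + 2 * δ / x ^ 2

theorem xDot_neg_s₂ {γ δ x : K} (hδ : δ ≠ 0) (hx : x ≠ 0) (y : K) :
    xDot γ (-δ) x (s₂ γ δ x y) = xDot γ δ x y := by
  unfold xDot s₂
  field_simp
  ring

/-- By the chain rule the left side is the derivative of `s₂ γ δ x y` along a solution of the
`δ`-system (see `HasDerivAt.inceXII_s₂`). -/
theorem yDot_add_mul_xDot {γ δ x : K} (hδ : δ ≠ 0) (hx : x ≠ 0) (α β y : K) :
    yDot α β γ δ x y + (2 * γ / (δ * x ^ 2) - 4 * δ / x ^ 3) * xDot γ δ x y =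
      yDot α β γ (-δ) x (s₂ γ δ x y) := by
  unfold xDot yDot s₂
  field_simp
  ring

end InceXII

open InceXII

theorem HasDerivAt.inceXII_s₂ {𝕜 𝕜' : Type*} [NontriviallyNormedField 𝕜]
    [NontriviallyNormedField 𝕜'] [NormedAlgebra 𝕜 𝕜'] {x y : 𝕜 → 𝕜'} {x' y' : 𝕜'} {t : 𝕜}
    (γ : 𝕜') {δ : 𝕜'} (hδ : δ ≠ 0) (hx : HasDerivAt x x' t) (hy : HasDerivAt y y' t)
    (hxt : x t ≠ 0) :
    HasDerivAt (fun s => s₂ γ δ (x s) (y s))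
      (y' + (2 * γ / (δ * x t ^ 2) - 4 * δ / x t ^ 3) * x') t := by
  have hγ := (hasDerivAt_const t (2 * γ)).fun_div (hx.const_mul δ) (mul_ne_zero hδ hxt)
  have hδ' := (hasDerivAt_const t (2 * δ)).fun_div (hx.fun_pow 2) (pow_ne_zero 2 hxt)
  refine ((hy.fun_sub hγ).fun_add hδ').congr_deriv ?_
  field_simp
  ring

/-- The Bäcklund transformation `s₂ : (x,y) ↦ (x, y - 2γ/(δx) + 2δ/x²)`,
`(α,β,γ,δ) ↦ (α,β,γ,-δ)` maps solutions of the Ince-XII system with parameters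
`(α,β,γ,δ)` to solutions with parameters `(α,β,γ,-δ)`. -/
theorem ince_XII_backlund (α β γ δ : ℂ) (hδ : δ ≠ 0) (x y : ℝ → ℂ)
    (hx : Differentiable ℝ x) (hy : Differentiable ℝ y)
    (hne : ∀ t, x t ≠ 0)
    (hx' : ∀ t, deriv x t = (x t) ^ 2 * y t - (γ / δ) * x t + δ)
    (hy' : ∀ t, deriv y t = -(x t) * (y t) ^ 2 + α * x t + (γ / δ) * y t + β) :
    ∀ t, deriv x t =
        (x t) ^ 2 * (y t - 2 * γ / (δ * x t) + 2 * δ / (x t) ^ 2)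
          - (γ / (-δ)) * x t + (-δ) ∧
      deriv (fun s => y s - 2 * γ / (δ * x s) + 2 * δ / (x s) ^ 2) t =
        -(x t) * (y t - 2 * γ / (δ * x t) + 2 * δ / (x t) ^ 2) ^ 2 + α * x t
          + (γ / (-δ)) * (y t - 2 * γ / (δ * x t) + 2 * δ / (x t) ^ 2) + β := by
  intro t
  have hs₂ := (hx t).hasDerivAt.inceXII_s₂ γ hδ (hy t).hasDerivAt (hne t)
  constructor
  · exact (hx' t).trans (xDot_neg_s₂ hδ (hne t) (y t)).symm
  · rw [hx' t, hy' t] at hs₂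
    exact hs₂.deriv.trans (yDot_add_mul_xDot hδ (hne t) α β (y t))
end

section
/- The function I(x,y) = x(4x - y²)² is a first integral of the system x' = xy, y' = -y²/4 + 3x; i.e., along any solution (x(t), y(t)) the quantity x(4x - y²)² is constant. -/
/-!
Along a solution, `x' = x y` and `w := 4x - y²` satisfies `w' = -(y/2) w`, so the logarithmic
derivatives of `x` and `w²` cancel and `x w²` has derivative zero.
-/

section

variable {𝕜 𝔸 : Type*} [NontriviallyNormedField 𝕜]

theorem hasDerivAt_mul_sq_of_hasDerivAt_mul [NormedCommRing 𝔸] [NormedAlgebra 𝕜 𝔸]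
    {x w : 𝕜 → 𝔸} {a b : 𝔸} {t : 𝕜}
    (hx : HasDerivAt x (x t * a) t) (hw : HasDerivAt w (b * w t) t) (hab : a + 2 * b = 0) :
    HasDerivAt (fun s => x s * w s ^ 2) 0 t := by
  refine (hx.mul (hw.pow 2)).congr_deriv ?_
  simp only [Pi.pow_apply, Nat.cast_ofNat]
  linear_combination x t * w t ^ 2 * hab

theorem hasDerivAt_four_mul_sub_sq [NormedField 𝔸] [NormedAlgebra 𝕜 𝔸] [CharZero 𝔸]
    {x y : 𝕜 → 𝔸} {t : 𝕜}
    (hx : HasDerivAt x (x t * y t) t) (hy : HasDerivAt y (-(y t) ^ 2 / 4 + 3 * x t) t) :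
    HasDerivAt (fun s => 4 * x s - y s ^ 2) (-(y t / 2) * (4 * x t - y t ^ 2)) t := by
  refine ((hx.const_mul 4).sub (hy.pow 2)).congr_deriv ?_
  simp only [Nat.cast_ofNat]
  ring

end

/-- `I = x (4x - y²)²` is a first integral of the Ince-XXI system
`x' = x y`, `y' = -y²/4 + 3x`. -/
theorem ince_XXI_first_integral (x y : ℝ → ℂ)
    (hx : Differentiable ℝ x) (hy : Differentiable ℝ y)
    (hx' : ∀ t, deriv x t = x t * y t)
    (hy' : ∀ t, deriv y t = -(y t) ^ 2 / 4 + 3 * x t) :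
    ∀ t₁ t₂ : ℝ,
      x t₁ * (4 * x t₁ - (y t₁) ^ 2) ^ 2 =
      x t₂ * (4 * x t₂ - (y t₂) ^ 2) ^ 2 := by
  have hI : ∀ t, HasDerivAt (fun s => x s * (4 * x s - y s ^ 2) ^ 2) 0 t := fun t => by
    have hxt : HasDerivAt x (x t * y t) t := hx' t ▸ (hx t).hasDerivAt
    have hyt : HasDerivAt y (-(y t) ^ 2 / 4 + 3 * x t) t := hy' t ▸ (hy t).hasDerivAt
    exact hasDerivAt_mul_sq_of_hasDerivAt_mul hxt (hasDerivAt_four_mul_sub_sq hxt hyt) (by ring)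
  exact is_const_of_deriv_eq_zero (fun t => (hI t).differentiableAt) (fun t => (hI t).deriv)
end

section
/- For any constants c₁, c₂ ∈ ℂ, the pair x(t) = (t²/4 + c₁t/2 + c₂)/(t + c₁), y(t) = -1/(t + c₁) solves the system x' = xy + 1/2, y' = y² (away from t = -c₁). -/
section RiccatiPair

variable {𝕜 : Type*} [NontriviallyNormedField 𝕜] {c₁ z : 𝕜}

theorem hasDerivAt_neg_one_div_add_const (hz : z + c₁ ≠ 0) :
    HasDerivAt (fun w : 𝕜 => -1 / (w + c₁)) ((-1 / (z + c₁)) ^ 2) z := by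
  have h : HasDerivAt (fun w : 𝕜 => -1 / (w + c₁)) ((0 * (z + c₁) - -1 * 1) / (z + c₁) ^ 2) z :=
    (hasDerivAt_const z (-1 : 𝕜)).div ((hasDerivAt_id' z).add_const c₁) hz
  convert h using 1
  field_simp
  ring

theorem hasDerivAt_quadratic_div_add_const [CharZero 𝕜] (c₂ : 𝕜) (hz : z + c₁ ≠ 0) :
    HasDerivAt (fun w : 𝕜 => (w ^ 2 / 4 + c₁ * w / 2 + c₂) / (w + c₁))
      ((z ^ 2 / 4 + c₁ * z / 2 + c₂) / (z + c₁) * (-1 / (z + c₁)) + 1 / 2) z := by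
  have hnum : HasDerivAt (fun w : 𝕜 => w ^ 2 / 4 + c₁ * w / 2 + c₂) (2 * z / 4 + c₁ / 2) z := by
    simpa using ((hasDerivAt_pow 2 z).div_const 4).add
      (((hasDerivAt_id' z).const_mul c₁).div_const 2) |>.add_const c₂
  have h : HasDerivAt (fun w : 𝕜 => (w ^ 2 / 4 + c₁ * w / 2 + c₂) / (w + c₁))
      (((2 * z / 4 + c₁ / 2) * (z + c₁) - (z ^ 2 / 4 + c₁ * z / 2 + c₂) * 1) / (z + c₁) ^ 2) z :=
    hnum.div ((hasDerivAt_id' z).add_const c₁) hz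
  convert h using 1
  field_simp
  ring

end RiccatiPair

/-- For any `c₁ c₂ : ℂ`, `x = (t²/4 + c₁ t/2 + c₂)/(t + c₁)`,
`y = -1/(t + c₁)` solves `x' = x y + 1/2`, `y' = y²` away from `t = -c₁`. -/
theorem ince_XXII_solution (c₁ c₂ : ℂ) :
    ∀ t : ℝ, (t : ℂ) ≠ -c₁ →
      deriv (fun s : ℝ =>
          ((s : ℂ) ^ 2 / 4 + c₁ * s / 2 + c₂) / ((s : ℂ) + c₁)) t =
        (((t : ℂ) ^ 2 / 4 + c₁ * t / 2 + c₂) / ((t : ℂ) + c₁))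
          * (-1 / ((t : ℂ) + c₁)) + 1 / 2 ∧
      deriv (fun s : ℝ => -1 / ((s : ℂ) + c₁)) t =
        (-1 / ((t : ℂ) + c₁)) ^ 2 := by
  intro t ht
  have hpole : (t : ℂ) + c₁ ≠ 0 := fun h => ht (eq_neg_of_add_eq_zero_left h)
  exact ⟨(hasDerivAt_quadratic_div_add_const c₂ hpole).comp_ofReal.deriv,
    (hasDerivAt_neg_one_div_add_const hpole).comp_ofReal.deriv⟩
end

section
/- The transformation s₂ : (x,y) ↦ (x, y + 2γ/x), (α,β,γ) ↦ (α,β,-γ) maps solutions of the system x' = xy + γ, y' = (3/2)x² - (1/2)y² + 4αx + 2β with parameters (α,β,γ) to solutions with parameters (α,β,-γ), wherever x is nonvanishing. -/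
/-! Since `x · (2γ/x) = 2γ`, the right-hand side `x y + γ` equals `x (y + 2γ/x) - γ`. For the
second equation, differentiating `2γ/x` along `x' = x y + γ` contributes `-2γ (x y + γ)/x²`,
which is exactly the change of `-(1/2) y²` under the shift. -/

section BacklundAlgebra

variable {K : Type*} [Field K]

theorem mul_add_two_mul_div_add_neg {x : K} (hx : x ≠ 0) (y γ : K) :
    x * (y + 2 * γ / x) + -γ = x * y + γ := by
  field_simp
  ring

theorem inceXXX_rhs_sub_eq [NeZero (2 : K)] {x : K} (hx : x ≠ 0) (y α β γ : K) :
    (3 / 2) * x ^ 2 - (1 / 2) * y ^ 2 + 4 * α * x + 2 * β - 2 * γ * (x * y + γ) / x ^ 2 =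
      (3 / 2) * x ^ 2 - (1 / 2) * (y + 2 * γ / x) ^ 2 + 4 * α * x + 2 * β := by
  field_simp
  ring

end BacklundAlgebra

theorem HasDerivAt.add_const_div {𝕜 𝕜' : Type*} [NontriviallyNormedField 𝕜]
    [NontriviallyNormedField 𝕜'] [NormedAlgebra 𝕜 𝕜'] {x y : 𝕜 → 𝕜'} {x' y' : 𝕜'} {t : 𝕜}
    (hy : HasDerivAt y y' t) (hx : HasDerivAt x x' t) (hxt : x t ≠ 0) (c : 𝕜') :
    HasDerivAt (fun s => y s + c / x s) (y' - c * x' / x t ^ 2) t :=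
  (hy.add ((hasDerivAt_const t c).fun_div hx hxt)).congr_deriv (by ring)

/-- The Bäcklund transformation `s₂ : (x,y) ↦ (x, y + 2γ/x)`,
`(α,β,γ) ↦ (α,β,-γ)` maps solutions of the Ince-XXX system with parameters
`(α,β,γ)` to solutions with parameters `(α,β,-γ)`. -/
theorem ince_XXX_backlund (α β γ : ℂ) (x y : ℝ → ℂ)
    (hx : Differentiable ℝ x) (hy : Differentiable ℝ y)
    (hne : ∀ t, x t ≠ 0)
    (hx' : ∀ t, deriv x t = x t * y t + γ)
    (hy' : ∀ t, deriv y t =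
      (3 / 2) * (x t) ^ 2 - (1 / 2) * (y t) ^ 2 + 4 * α * x t + 2 * β) :
    ∀ t, deriv x t = x t * (y t + 2 * γ / x t) + (-γ) ∧
      deriv (fun s => y s + 2 * γ / x s) t =
        (3 / 2) * (x t) ^ 2 - (1 / 2) * (y t + 2 * γ / x t) ^ 2
          + 4 * α * x t + 2 * β := by
  intro t
  refine ⟨by rw [hx' t, mul_add_two_mul_div_add_neg (hne t)], ?_⟩
  have hshift := (hy t).hasDerivAt.add_const_div (hx t).hasDerivAt (hne t) (2 * γ)
  rw [hshift.deriv, hy' t, hx' t, ← inceXXX_rhs_sub_eq (hne t), mul_div_assoc]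
end

section
/- The function H(x,y) = xy²/2 - x³/2 - 2αx² - 2βx + γy is a first integral of the system x' = xy + γ, y' = (3/2)x² - (1/2)y² + 4αx + 2β. -/
/-!
The Ince-XXX system is Hamiltonian: with `H = hamiltonian α β γ` one has `x' = ∂H/∂y`
and `y' = -∂H/∂x`. Hence `d/dt H(x, y) = ∂H/∂x · ∂H/∂y - ∂H/∂y · ∂H/∂x = 0` along every
solution, and a function with vanishing derivative on `ℝ` is constant.
-/

noncomputable section

namespace InceXXX

variable (α β γ : ℂ)

def hamiltonian (x y : ℂ) : ℂ :=
  x * y ^ 2 / 2 - x ^ 3 / 2 - 2 * α * x ^ 2 - 2 * β * x + γ * y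

def fieldX (x y : ℂ) : ℂ := x * y + γ

def fieldY (x y : ℂ) : ℂ := 3 / 2 * x ^ 2 - 1 / 2 * y ^ 2 + 4 * α * x + 2 * β

variable {α β γ}

theorem hasDerivAt_hamiltonian_comp {x y : ℝ → ℂ} {x' y' : ℂ} {t : ℝ}
    (hx : HasDerivAt x x' t) (hy : HasDerivAt y y' t) :
    HasDerivAt (fun s => hamiltonian α β γ (x s) (y s))
      (-fieldY α β (x t) (y t) * x' + fieldX γ (x t) (y t) * y') t := by
  refine ((((((hx.fun_mul (hy.fun_pow 2)).div_const 2).fun_sub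
    ((hx.fun_pow 3).div_const 2)).fun_sub ((hx.fun_pow 2).const_mul (2 * α))).fun_sub
    (hx.const_mul (2 * β))).fun_add (hy.const_mul γ)).congr_deriv ?_
  simp only [fieldX, fieldY]
  push_cast
  ring

theorem hamiltonian_comp_eq {x y : ℝ → ℂ}
    (hx : Differentiable ℝ x) (hy : Differentiable ℝ y)
    (hx' : ∀ t, deriv x t = fieldX γ (x t) (y t))
    (hy' : ∀ t, deriv y t = fieldY α β (x t) (y t)) (t₁ t₂ : ℝ) :
    hamiltonian α β γ (x t₁) (y t₁) = hamiltonian α β γ (x t₂) (y t₂) := by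
  have hderiv (t : ℝ) : HasDerivAt (fun s => hamiltonian α β γ (x s) (y s)) 0 t :=
    (hasDerivAt_hamiltonian_comp (hx t).hasDerivAt (hy t).hasDerivAt).congr_deriv
      (by rw [hx', hy']; ring)
  exact is_const_of_deriv_eq_zero (fun t => (hderiv t).differentiableAt)
    (fun t => (hderiv t).deriv) t₁ t₂

end InceXXX

end

/-- `H = x y²/2 - x³/2 - 2α x² - 2β x + γ y` is a first integral of the
Ince-XXX system `x' = x y + γ`, `y' = (3/2)x² - (1/2)y² + 4αx + 2β`. -/
theorem ince_XXX_first_integral (α β γ : ℂ) (x y : ℝ → ℂ)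
    (hx : Differentiable ℝ x) (hy : Differentiable ℝ y)
    (hx' : ∀ t, deriv x t = x t * y t + γ)
    (hy' : ∀ t, deriv y t =
      (3 / 2) * (x t) ^ 2 - (1 / 2) * (y t) ^ 2 + 4 * α * x t + 2 * β) :
    ∀ t₁ t₂ : ℝ,
      x t₁ * (y t₁) ^ 2 / 2 - (x t₁) ^ 3 / 2 - 2 * α * (x t₁) ^ 2
          - 2 * β * x t₁ + γ * y t₁ =
      x t₂ * (y t₂) ^ 2 / 2 - (x t₂) ^ 3 / 2 - 2 * α * (x t₂) ^ 2
          - 2 * β * x t₂ + γ * y t₂ :=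
  InceXXX.hamiltonian_comp_eq hx hy hx' hy'
end

section
/- The transformation s₀ : (x,y,z) ↦ (x + c₁/z, y - 2c₁x/z - c₁²/z², z) with parameter change (c₁,c₂) ↦ (-c₁, -6c₁ + c₂) maps solutions of the system x' = y, y' = -2xy - 3xz - (3c₁+c₂)/4, z' = 2xz + c₁ with parameters (c₁,c₂) to solutions with parameters (-c₁, -6c₁+c₂), wherever z is nonvanishing; moreover s₀ is an involution. -/
/-!
Since `s₀` fixes `z` and `2xz + c₁ = 2(x + c₁/z)z - c₁`, the `z`-equation is preserved once `c₁`
changes sign; the `x`- and `y`-equations follow from the quotient rule after clearing the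
denominators `z` and `z²`.
-/

section Backlund

variable {𝕜 : Type*} [NontriviallyNormedField 𝕜] [NormedAlgebra 𝕜 ℂ]
  {c₁ c₂ : ℂ} {x y z : 𝕜 → ℂ} {t : 𝕜}

theorem backlund_z_rhs_eq (c₁ X Z : ℂ) (hZ : Z ≠ 0) :
    2 * X * Z + c₁ = 2 * (X + c₁ / Z) * Z + (-c₁) := by
  field_simp
  ring

theorem hasDerivAt_backlund_x (hx : HasDerivAt x (y t) t)
    (hz : HasDerivAt z (2 * x t * z t + c₁) t) (hne : z t ≠ 0) :
    HasDerivAt (fun s => x s + c₁ / z s)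
      (y t - 2 * c₁ * x t / z t - c₁ ^ 2 / z t ^ 2) t := by
  refine (hx.add ((hasDerivAt_const t c₁).div hz hne)).congr_deriv ?_
  field_simp
  ring

theorem hasDerivAt_backlund_y (hx : HasDerivAt x (y t) t)
    (hy : HasDerivAt y (-2 * x t * y t - 3 * x t * z t - (3 * c₁ + c₂) / 4) t)
    (hz : HasDerivAt z (2 * x t * z t + c₁) t) (hne : z t ≠ 0) :
    HasDerivAt (fun s => y s - 2 * c₁ * x s / z s - c₁ ^ 2 / z s ^ 2)
      (-2 * (x t + c₁ / z t) * (y t - 2 * c₁ * x t / z t - c₁ ^ 2 / z t ^ 2)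
        - 3 * (x t + c₁ / z t) * z t - (3 * (-c₁) + (-6 * c₁ + c₂)) / 4) t := by
  refine ((hy.sub ((hx.const_mul (2 * c₁)).div hz hne)).sub
    ((hasDerivAt_const t (c₁ ^ 2)).div (hz.fun_pow 2) (pow_ne_zero 2 hne))).congr_deriv ?_
  field_simp
  ring

end Backlund

theorem backlund_x_involutive (c₁ X Z : ℂ) :
    (X + c₁ / Z) + (-c₁) / Z = X := by
  ring

theorem backlund_y_involutive (c₁ X Y Z : ℂ) (hZ : Z ≠ 0) :
    (Y - 2 * c₁ * X / Z - c₁ ^ 2 / Z ^ 2)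
      - 2 * (-c₁) * (X + c₁ / Z) / Z - (-c₁) ^ 2 / Z ^ 2 = Y := by
  field_simp
  ring

/-- The transformation `s₀ : (x,y,z) ↦ (x + c₁/z, y - 2c₁x/z - c₁²/z², z)`,
`(c₁,c₂) ↦ (-c₁, -6c₁ + c₂)` maps solutions of the system
`x' = y`, `y' = -2xy - 3xz - (3c₁+c₂)/4`, `z' = 2xz + c₁` with parameters
`(c₁,c₂)` to solutions with parameters `(-c₁, -6c₁+c₂)` (where `z ≠ 0`),
and `s₀` is an involution. -/
theorem ince_XXXV_backlund (c₁ c₂ : ℂ) (x y z : ℝ → ℂ)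
    (hx : Differentiable ℝ x) (hy : Differentiable ℝ y)
    (hz : Differentiable ℝ z) (hne : ∀ t, z t ≠ 0)
    (hx' : ∀ t, deriv x t = y t)
    (hy' : ∀ t, deriv y t = -2 * x t * y t - 3 * x t * z t - (3 * c₁ + c₂) / 4)
    (hz' : ∀ t, deriv z t = 2 * x t * z t + c₁) :
    (∀ t,
      deriv (fun s => x s + c₁ / z s) t =
        y t - 2 * c₁ * x t / z t - c₁ ^ 2 / (z t) ^ 2 ∧
      deriv (fun s => y s - 2 * c₁ * x s / z s - c₁ ^ 2 / (z s) ^ 2) t =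
        -2 * (x t + c₁ / z t) * (y t - 2 * c₁ * x t / z t - c₁ ^ 2 / (z t) ^ 2)
          - 3 * (x t + c₁ / z t) * z t - (3 * (-c₁) + (-6 * c₁ + c₂)) / 4 ∧
      deriv z t = 2 * (x t + c₁ / z t) * z t + (-c₁)) ∧
    ((∀ X Y Z : ℂ, Z ≠ 0 →
        (X + c₁ / Z) + (-c₁) / Z = X ∧
        (Y - 2 * c₁ * X / Z - c₁ ^ 2 / Z ^ 2)
            - 2 * (-c₁) * (X + c₁ / Z) / Z - (-c₁) ^ 2 / Z ^ 2 = Y) ∧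
      -(-c₁) = c₁ ∧ -6 * (-c₁) + (-6 * c₁ + c₂) = c₂) := by
  refine ⟨fun t => ?_, fun X Y Z hZ => ⟨backlund_x_involutive c₁ X Z,
    backlund_y_involutive c₁ X Y Z hZ⟩, neg_neg c₁, by ring⟩
  have hxt : HasDerivAt x (y t) t := hx' t ▸ (hx t).hasDerivAt
  have hyt := hy' t ▸ (hy t).hasDerivAt
  have hzt := hz' t ▸ (hz t).hasDerivAt
  exact ⟨(hasDerivAt_backlund_x hxt hzt (hne t)).deriv,
    (hasDerivAt_backlund_y hxt hyt hzt (hne t)).deriv,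
    (hz' t).trans (backlund_z_rhs_eq c₁ (x t) (z t) (hne t))⟩
end
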